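/- Let K be a field of characteristic 2 and let 𝒜 be the minimal strictly unital A∞-algebra over K with basis {1, a₀, b₁,…,b₆}, |a₀| = 2, |bᵢ| = 0, whose only nontrivial products are μ²(b₁,b₄) = μ²(b₂,b₅) = μ²(b₆,b₃) = μ²(b₄,b₁) = μ²(b₅,b₂) = μ²(b₃,b₆) = a₀, μ³ = 0, and μ⁴(b₄,b₁,b₂,b₅) = μ⁴(b₅,b₂,b₄,b₁) = μ⁴(b₅,b₂,b₅,b₂) = a₀ (all other μ⁴ on basis quadruples vanish). Then there is no A∞-quasi-isomorphism from 𝒜 to the cohomology algebra H*(S; K) of any closed orientable surface S (regarded as a minimal A∞-algebra with μ² the cup product and μ^d = 0 for d ≥ 3). -/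

import Mathlib

/-!
Summing the arity-4 A∞-functor equations over the ten cyclic rotations of `(b₁,b₂,b₅,b₄)`,
`(b₁,b₅,b₂,b₄)` and `(b₂,b₅,b₂,b₅)`, all `F³`-terms and the remaining `F² ∪ F²`-terms cancel in
pairs, because the cup product is commutative and `2 = 0`; what is left is
`F¹(a₀) = y²` with `y = F²(b₂,b₅) + F²(b₅,b₂)`. In characteristic 2 squaring is additive on
`H*(S;K)` and kills every class of positive degree, so `y²` is a scalar `s • 1`. On the other hand
`F¹(a₀) = F¹(b₄) F¹(b₁)` and `F¹(b₁)² = F¹(μ²(b₁,b₁)) = 0`, so `(s • 1)² = 0`. Hence `s = 0`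
and `F¹(a₀) = 0`, contradicting the injectivity of `F¹`.
-/

namespace Stmt13

variable (K : Type*) [Field K]

/-- Underlying space of the minimal strictly unital A∞-algebra `𝒜` over a field of
characteristic 2: basis `Fin 8` with `0 ↦ 1` (strict unit, degree 0), `1 ↦ a₀`
(degree 2), `2,…,7 ↦ b₁,…,b₆` (degree 0). -/
abbrev V (K : Type*) [Field K] : Type _ := Fin 8 → K

def e (g : Fin 8) : V K := Pi.single g 1

/-- `μ²`-structure constants (characteristic 2): `μ²(b₁,b₄) = μ²(b₂,b₅) = μ²(b₆,b₃) =
μ²(b₄,b₁) = μ²(b₅,b₂) = μ²(b₃,b₆) = a₀`, all other products of `b`'s zero. -/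
def c (i j : Fin 8) : K :=
  if (i, j) = (2, 5) ∨ (i, j) = (3, 6) ∨ (i, j) = (7, 4) ∨
     (i, j) = (5, 2) ∨ (i, j) = (6, 3) ∨ (i, j) = (4, 7) then 1 else 0

/-- The strictly unital product `μ²` of `𝒜`, bilinear by construction. -/
def mu2 (v w : V K) : V K :=
  v 0 • w + w 0 • v - (v 0 * w 0) • e K 0 +
    (∑ i : Fin 8, ∑ j : Fin 8, c K i j * v i * w j) • e K 1

/-- `μ⁴` on basis quadruples: `μ⁴(b₄,b₁,b₂,b₅) = μ⁴(b₅,b₂,b₄,b₁) = μ⁴(b₅,b₂,b₅,b₂) = a₀`,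
all other `μ⁴` on basis quadruples vanish (`μ³ = 0` and `μ^d = 0` for `d ∉ {2,4}`). -/
def mu4 (i j k l : Fin 8) : V K :=
  if (i, j, k, l) = (5, 2, 3, 6) ∨ (i, j, k, l) = (6, 3, 5, 2) ∨
     (i, j, k, l) = (6, 3, 6, 3) then e K 1 else 0

lemma mu2_e_e {i j : Fin 8} (hi : i ≠ 0) (hj : j ≠ 0) :
    mu2 K (e K i) (e K j) = c K i j • e K 1 := by
  ext t
  simp [mu2, e, Pi.single_apply, Finset.sum_ite_eq', hi.symm, hj.symm]

lemma sum_mu2_e_e_smul {M : Type*} [AddCommMonoid M] [Module K M] {i j : Fin 8}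
    (hi : i ≠ 0) (hj : j ≠ 0) (X : Fin 8 → M) :
    ∑ t, mu2 K (e K i) (e K j) t • X t = c K i j • X 1 := by
  rw [mu2_e_e K hi hj]
  simp [e, Pi.single_apply]

lemma map_a0_eq_sq {R : Type*} [CommRing R] [CharP R 2] [Module K R]
    (F1 : V K →ₗ[K] R) (F2 : Fin 8 → Fin 8 → R) (F3 : Fin 8 → Fin 8 → Fin 8 → R)
    (heq4 : ∀ i j k l : Fin 8,
        F1 (mu4 K i j k l) =
          F3 i j k * F1 (e K l) + F1 (e K i) * F3 j k l + F2 i j * F2 k l +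
          (∑ t : Fin 8, mu2 K (e K i) (e K j) t • F3 t k l) +
          (∑ t : Fin 8, mu2 K (e K j) (e K k) t • F3 i t l) +
          (∑ t : Fin 8, mu2 K (e K k) (e K l) t • F3 i j t)) :
    F1 (e K 1) = (F2 3 6 + F2 6 3) ^ 2 := by
  have hbasis : ∀ i j k l : Fin 8, i ≠ 0 → j ≠ 0 → k ≠ 0 → l ≠ 0 →
      F1 (mu4 K i j k l) =
        F3 i j k * F1 (e K l) + F1 (e K i) * F3 j k l + F2 i j * F2 k l +
        c K i j • F3 1 k l + c K j k • F3 i 1 l + c K k l • F3 i j 1 := by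
    intro i j k l hi hj hk hl
    rw [heq4, sum_mu2_e_e_smul K hi hj, sum_mu2_e_e_smul K hj hk, sum_mu2_e_e_smul K hk hl]
  -- `2, 3, 6, 5` encode `b₁, b₂, b₅, b₄`
  have E1 := hbasis 2 3 6 5
  have E2 := hbasis 3 6 5 2
  have E3 := hbasis 6 5 2 3
  have E4 := hbasis 5 2 3 6
  have E5 := hbasis 2 6 3 5
  have E6 := hbasis 6 3 5 2
  have E7 := hbasis 3 5 2 6
  have E8 := hbasis 5 2 6 3
  have E9 := hbasis 3 6 3 6
  have E10 := hbasis 6 3 6 3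
  simp [c, mu4] at E1 E2 E3 E4 E5 E6 E7 E8 E9 E10
  linear_combination (norm := ring_nf) E1 + E2 + E3 + E4 + E5 + E6 + E7 + E8 + E9 + E10
  simp [CharTwo.two_eq_zero]

lemma map_a0_sq_eq_zero {R : Type*} [CommRing R] [Module K R] (F1 : V K →ₗ[K] R)
    (heq2 : ∀ i j : Fin 8, F1 (mu2 K (e K i) (e K j)) = F1 (e K i) * F1 (e K j)) :
    F1 (e K 1) ^ 2 = 0 := by
  have h52 := heq2 5 2
  have h22 := heq2 2 2
  rw [mu2_e_e K (by decide) (by decide), map_smul] at h52 h22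
  simp [c] at h52 h22
  rw [h52, mul_pow, sq (F1 (e K 2)), ← h22, mul_zero]

lemma mul_comm_of_basis {ι R A : Type*} [CommSemiring R] [Semiring A] [Algebra R A]
    (b : Module.Basis ι R A) (h : ∀ i j, b i * b j = b j * b i) (x y : A) :
    x * y = y * x := by
  have : LinearMap.mul R A = (LinearMap.mul R A).flip := b.ext fun i => b.ext fun j => h i j
  exact congr($this x y)

lemma sq_mem_bot_of_basis {ι R A : Type*} [CommSemiring R] [CommSemiring A] [CharP A 2]
    [Algebra R A] (b : Module.Basis ι R A) (h : ∀ i, b i ^ 2 ∈ (⊥ : Subalgebra R A)) (x : A) :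
    x ^ 2 ∈ (⊥ : Subalgebra R A) := by
  induction b.mem_span x using Submodule.span_induction with
  | mem _ hx => obtain ⟨i, rfl⟩ := hx; exact h i
  | zero => simp
  | add x y _ _ hx hy => rw [CharTwo.add_sq]; exact add_mem hx hy
  | smul r x _ hx => rw [smul_pow]; exact Subalgebra.smul_mem _ hx _

lemma algebraMap_eq_zero_of_sq_eq_zero {R A : Type*} [Field R] [Semiring A] [Algebra R A]
    {s : R} (h : algebraMap R A s ^ 2 = 0) : algebraMap R A s = 0 := by
  rcases eq_or_ne s 0 with rfl | hs
  · exact map_zero _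
  · exact ((hs.isUnit.map _).mul_left_eq_zero).mp (by rwa [← sq])

section SurfaceCohomology

variable {H : Type*} [Ring H] [Algebra K H] {g : ℕ} {φ ψ : Fin g → H} {ν : H}
  (b : Module.Basis (Unit ⊕ (Fin g ⊕ Fin g) ⊕ Unit) K H)

lemma surface_basis_mul_comm [CharP H 2] (hb1 : b (Sum.inl ()) = 1)
    (hbφ : ∀ j, b (Sum.inr (Sum.inl (Sum.inl j))) = φ j)
    (hbψ : ∀ j, b (Sum.inr (Sum.inl (Sum.inr j))) = ψ j)
    (hbν : b (Sum.inr (Sum.inr ())) = ν)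
    (hφψ : ∀ j, φ j * ψ j = ν) (hψφ : ∀ j, ψ j * φ j = -ν)
    (hφφ : ∀ i j, φ i * φ j = 0) (hψψ : ∀ i j, ψ i * ψ j = 0)
    (hφψ' : ∀ i j, i ≠ j → φ i * ψ j = 0) (hψφ' : ∀ i j, i ≠ j → ψ i * φ j = 0)
    (hφν : ∀ i, φ i * ν = 0 ∧ ν * φ i = 0) (hψν : ∀ i, ψ i * ν = 0 ∧ ν * ψ i = 0)
    (hνν : ν * ν = 0) (i j) : b i * b j = b j * b i := by
  rcases i with ⟨⟩ | (a | a) | ⟨⟩ <;> rcases j with ⟨⟩ | (a' | a') | ⟨⟩ <;>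
    simp only [hb1, hbφ, hbψ, hbν, one_mul, mul_one, hφφ, hψψ, hνν, (hφν _).1, (hφν _).2,
      (hψν _).1, (hψν _).2]
  · rcases eq_or_ne a a' with rfl | h
    · rw [hφψ, hψφ, CharTwo.neg_eq]
    · rw [hφψ' _ _ h, hψφ' _ _ h.symm]
  · rcases eq_or_ne a a' with rfl | h
    · rw [hφψ, hψφ, CharTwo.neg_eq]
    · rw [hψφ' _ _ h, hφψ' _ _ h.symm]

lemma surface_basis_sq_mem_bot (hb1 : b (Sum.inl ()) = 1)
    (hbφ : ∀ j, b (Sum.inr (Sum.inl (Sum.inl j))) = φ j)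
    (hbψ : ∀ j, b (Sum.inr (Sum.inl (Sum.inr j))) = ψ j)
    (hbν : b (Sum.inr (Sum.inr ())) = ν)
    (hφφ : ∀ i j, φ i * φ j = 0) (hψψ : ∀ i j, ψ i * ψ j = 0) (hνν : ν * ν = 0) (i) :
    b i ^ 2 ∈ (⊥ : Subalgebra K H) := by
  rcases i with ⟨⟩ | (a | a) | ⟨⟩ <;> simp [sq, hb1, hbφ, hbψ, hbν, hφφ, hψψ, hνν]

end SurfaceCohomology

/-- over a field `K` of characteristic 2 there is no A∞-quasi-isomorphism
from `𝒜` to the cohomology algebra `H = H*(S;K)` of any closed orientable surface `S`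
(of any genus `g`, with its basis `1, φ₁,ψ₁,…,φ_g,ψ_g, ν` and cup product, viewed as a
minimal A∞-algebra with `μ^d = 0` for `d ≥ 3`): there is no strictly unital family
`(F¹, F², F³, …)` satisfying the A∞-functor equations (for minimal source and target
with `μ³_𝒜 = 0` these are, in the relevant arities `d = 2, 3, 4`, the equations listed
below, `F^d` extended multilinearly) with `F¹` bijective. -/
theorem stmt_13 (hK : CharP K 2) (H : Type*) [Ring H] [Algebra K H]
    (g : ℕ) (φ ψ : Fin g → H) (ν : H)
    (b : Module.Basis (Unit ⊕ (Fin g ⊕ Fin g) ⊕ Unit) K H)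
    (hb1 : b (Sum.inl ()) = 1)
    (hbφ : ∀ j, b (Sum.inr (Sum.inl (Sum.inl j))) = φ j)
    (hbψ : ∀ j, b (Sum.inr (Sum.inl (Sum.inr j))) = ψ j)
    (hbν : b (Sum.inr (Sum.inr ())) = ν)
    (hφψ : ∀ j, φ j * ψ j = ν) (hψφ : ∀ j, ψ j * φ j = -ν)
    (hφφ : ∀ i j, φ i * φ j = 0) (hψψ : ∀ i j, ψ i * ψ j = 0)
    (hφψ' : ∀ i j, i ≠ j → φ i * ψ j = 0) (hψφ' : ∀ i j, i ≠ j → ψ i * φ j = 0)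
    (hφν : ∀ i, φ i * ν = 0 ∧ ν * φ i = 0) (hψν : ∀ i, ψ i * ν = 0 ∧ ν * ψ i = 0)
    (hνν : ν * ν = 0) :
    ¬ ∃ (F1 : V K →ₗ[K] H) (F2 : Fin 8 → Fin 8 → H) (F3 : Fin 8 → Fin 8 → Fin 8 → H),
      -- strict unitality of the A∞-morphism
      F1 (e K 0) = 1 ∧
      (∀ j : Fin 8, F2 0 j = 0 ∧ F2 j 0 = 0) ∧
      (∀ i j k : Fin 8, i = 0 ∨ j = 0 ∨ k = 0 → F3 i j k = 0) ∧
      -- the arity-2 A∞-functor equation (both sides minimal)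
      (∀ i j : Fin 8, F1 (mu2 K (e K i) (e K j)) = F1 (e K i) * F1 (e K j)) ∧
      -- the arity-3 A∞-functor equation (μ³_𝒜 = 0, μ³_H = 0, characteristic 2)
      (∀ i j k : Fin 8,
        F2 i j * F1 (e K k) + F1 (e K i) * F2 j k +
          (∑ t : Fin 8, mu2 K (e K i) (e K j) t • F2 t k) +
          (∑ t : Fin 8, mu2 K (e K j) (e K k) t • F2 i t) = 0) ∧
      -- the arity-4 A∞-functor equation
      (∀ i j k l : Fin 8,
        F1 (mu4 K i j k l) =
          F3 i j k * F1 (e K l) + F1 (e K i) * F3 j k l + F2 i j * F2 k l +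
          (∑ t : Fin 8, mu2 K (e K i) (e K j) t • F3 t k l) +
          (∑ t : Fin 8, mu2 K (e K j) (e K k) t • F3 i t l) +
          (∑ t : Fin 8, mu2 K (e K k) (e K l) t • F3 i j t)) ∧
      -- quasi-isomorphism between minimal A∞-algebras: `F¹` is an isomorphism
      Function.Bijective F1 := by
  have := hK
  rintro ⟨F1, F2, F3, -, -, -, heq2, -, heq4, hbij⟩
  have : Nontrivial H := nontrivial_of_ne 1 0 (hb1 ▸ b.ne_zero _)
  have : CharP H 2 := charP_of_injective_algebraMap (algebraMap K H).injective 2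
  let : CommRing H :=
    { ‹Ring H› with
      mul_comm := mul_comm_of_basis b (surface_basis_mul_comm K b hb1 hbφ hbψ hbν hφψ hψφ hφφ hψψ
        hφψ' hψφ' hφν hψν hνν) }
  obtain ⟨s, hs⟩ := Algebra.mem_bot.mp <| sq_mem_bot_of_basis b
    (surface_basis_sq_mem_bot K b hb1 hbφ hbψ hbν hφφ hψψ hνν) (F2 3 6 + F2 6 3)
  have ha0 : F1 (e K 1) = algebraMap K H s := (map_a0_eq_sq K F1 F2 F3 heq4).trans hs.symm
  have ha0_zero : F1 (e K 1) = 0 :=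
    ha0 ▸ algebraMap_eq_zero_of_sq_eq_zero (ha0 ▸ map_a0_sq_eq_zero K F1 heq2)
  have he1 : e K 1 ≠ 0 := Pi.single_ne_zero_iff.mpr one_ne_zero
  exact he1 (hbij.1 (ha0_zero.trans (map_zero F1).symm))

end Stmt13
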